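/- arXiv:2407.05062 — 3 statements merged into one kernel-verified Lean document; each statement's English description precedes it below -/
import Mathlib

section
/- For every natural number n ≥ 1, every box K = {x ∈ ℝⁿ : mᵢ ≤ xᵢ ≤ Mᵢ for all i} (with mᵢ ≤ Mᵢ), every continuous function f : ℝⁿ → ℝ, and every ε > 0, there exist N ∈ ℕ, real numbers A₁,…,A_N, B₁,…,B_N, and real numbers C_{i,j} (1 ≤ i ≤ N, 1 ≤ j ≤ n) such that |∑_{i=1}^N Aᵢ · σ(∑_{j=1}^n C_{i,j} xⱼ + Bᵢ) − f(x)| < ε for all x ∈ K; equivalently, the linear span of the functions x ↦ σ(c·x + b) (c ∈ ℝⁿ, b ∈ ℝ) is dense in C(K, ℝ) for the sup norm. -/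
/-- The sigmoid function `σ(y) = (1 + exp (−y))⁻¹`. -/
noncomputable def sigmoid (y : ℝ) : ℝ := (1 + Real.exp (-y))⁻¹

/-!
The exponential ridge functions `x ↦ exp (c ⬝ᵥ x)` form a multiplicative monoid that separates
points, so by Stone–Weierstrass their span is dense in `C(K, ℝ)` for compact `K`. Each of them is a
uniform limit on `K` of rescaled sigmoid ridges, since
`exp t - exp b * σ (t - b) = exp t * σ (t - b) ≤ exp (2 t - b)`
is small uniformly in `t ≤ R` once `b` is large. Hence the closed span of the sigmoid ridges
contains a dense subspace.
-/

open Set Submodule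

lemma sigmoid_le_exp (y : ℝ) : sigmoid y ≤ Real.exp y := by
  calc (1 + Real.exp (-y))⁻¹ ≤ (Real.exp (-y))⁻¹ := by gcongr; linarith
    _ = Real.exp y := by rw [Real.exp_neg, inv_inv]

lemma exp_sub_exp_mul_sigmoid (t b : ℝ) :
    Real.exp t - Real.exp b * sigmoid (t - b) = Real.exp t * sigmoid (t - b) := by
  have hb : Real.exp b = Real.exp t * Real.exp (-(t - b)) := by
    rw [← Real.exp_add]; ring_nf
  rw [sigmoid, hb]
  field_simp
  ring

lemma abs_exp_sub_exp_mul_sigmoid_le (t b : ℝ) :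
    |Real.exp t - Real.exp b * sigmoid (t - b)| ≤ Real.exp (2 * t - b) := by
  rw [exp_sub_exp_mul_sigmoid, abs_of_nonneg (by unfold sigmoid; positivity)]
  calc Real.exp t * sigmoid (t - b) ≤ Real.exp t * Real.exp (t - b) := by
        gcongr; exact sigmoid_le_exp _
    _ = Real.exp (2 * t - b) := by rw [← Real.exp_add]; ring_nf

lemma exists_exp_mul_sigmoid_near (R : ℝ) {δ : ℝ} (hδ : 0 < δ) :
    ∃ b, ∀ t ≤ R, |Real.exp t - Real.exp b * sigmoid (t - b)| < δ := by
  refine ⟨2 * R - Real.log (δ / 2), fun t ht => ?_⟩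
  calc _ ≤ Real.exp (2 * t - (2 * R - Real.log (δ / 2))) := abs_exp_sub_exp_mul_sigmoid_le _ _
    _ ≤ Real.exp (Real.log (δ / 2)) := by gcongr; linarith
    _ < δ := by rw [Real.exp_log (by positivity)]; linarith

lemma Submodule.exists_fin_sum_eq_of_mem_span_range {R M α : Type*} [Semiring R]
    [AddCommMonoid M] [Module R M] {v : α → M} {x : M} (hx : x ∈ span R (range v)) :
    ∃ (N : ℕ) (a : Fin N → R) (p : Fin N → α), ∑ i, a i • v (p i) = x := by
  obtain ⟨N, a, g, rfl⟩ := mem_span_set'.1 hx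
  choose p hp using fun i => (g i).2
  exact ⟨N, a, p, by simp only [hp]⟩

section

variable {ι : Type*} [Fintype ι] (K : Set (ι → ℝ))

@[simps]
noncomputable def expRidge (c : ι → ℝ) : C(K, ℝ) := ⟨fun x => Real.exp (c ⬝ᵥ x), by fun_prop⟩

-- `sigmoid` is definitionally Mathlib's `Real.sigmoid`, whose continuity is `continuous_sigmoid`.
@[simps]
noncomputable def sigmoidRidge (p : (ι → ℝ) × ℝ) : C(K, ℝ) :=
  ⟨fun x => sigmoid (p.1 ⬝ᵥ x + p.2), continuous_sigmoid.comp (by fun_prop)⟩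

lemma expRidge_add (c d : ι → ℝ) : expRidge K (c + d) = expRidge K c * expRidge K d := by
  ext x
  simp [add_dotProduct, Real.exp_add]

lemma expRidge_zero : expRidge K 0 = 1 := by
  ext x
  simp

noncomputable def expRidgeSubmonoid : Submonoid C(K, ℝ) where
  carrier := range (expRidge K)
  mul_mem' := by
    rintro _ _ ⟨c, rfl⟩ ⟨d, rfl⟩
    exact ⟨c + d, expRidge_add K c d⟩
  one_mem' := ⟨0, expRidge_zero K⟩

lemma coe_adjoin_range_expRidge :
    (Algebra.adjoin ℝ (range (expRidge K)) : Set C(K, ℝ)) = span ℝ (range (expRidge K)) := by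
  rw [← Subalgebra.coe_toSubmodule, Algebra.adjoin_eq_span]
  exact congrArg (fun S : Submonoid C(K, ℝ) => (span ℝ (S : Set C(K, ℝ)) : Set C(K, ℝ)))
    (Submonoid.closure_eq (expRidgeSubmonoid K))

lemma separatesPoints_adjoin_range_expRidge :
    (Algebra.adjoin ℝ (range (expRidge K))).SeparatesPoints := by
  intro x y hxy
  obtain ⟨j, hj⟩ : ∃ j, (x : ι → ℝ) j ≠ (y : ι → ℝ) j := by
    by_contra! h
    exact hxy (Subtype.ext (funext h))
  classical
  refine ⟨_, ⟨expRidge K (Pi.single j 1), Algebra.subset_adjoin ⟨_, rfl⟩, rfl⟩, ?_⟩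
  simpa [single_dotProduct] using hj

lemma topologicalClosure_adjoin_range_expRidge_eq_top [CompactSpace K] :
    (Algebra.adjoin ℝ (range (expRidge K))).topologicalClosure = ⊤ :=
  ContinuousMap.subalgebra_topologicalClosure_eq_top_of_separatesPoints _
    (separatesPoints_adjoin_range_expRidge K)

lemma expRidge_mem_topologicalClosure_span_sigmoidRidge [CompactSpace K] (c : ι → ℝ) :
    expRidge K c ∈ (span ℝ (range (sigmoidRidge K))).topologicalClosure := by
  obtain ⟨R, hR⟩ : BddAbove (range fun x : K => c ⬝ᵥ (x : ι → ℝ)) :=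
    (isCompact_range (by fun_prop)).bddAbove
  refine Metric.mem_closure_iff.2 fun δ hδ => ?_
  obtain ⟨b, hb⟩ := exists_exp_mul_sigmoid_near R hδ
  refine ⟨Real.exp b • sigmoidRidge K (c, -b),
    smul_mem _ _ (subset_span ⟨_, rfl⟩), (ContinuousMap.dist_lt_iff hδ).2 fun x => ?_⟩
  simpa [Real.dist_eq, sub_eq_add_neg] using hb _ (hR ⟨x, rfl⟩)

lemma topologicalClosure_span_sigmoidRidge_eq_top [CompactSpace K] :
    (span ℝ (range (sigmoidRidge K))).topologicalClosure = ⊤ := by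
  have hexp : span ℝ (range (expRidge K)) ≤ (span ℝ (range (sigmoidRidge K))).topologicalClosure :=
    span_le.2 (range_subset_iff.2 (expRidge_mem_topologicalClosure_span_sigmoidRidge K))
  refine eq_top_iff.2 fun f _ => topologicalClosure_minimal _ hexp isClosed_closure ?_
  rw [← SetLike.mem_coe, Submodule.topologicalClosure_coe, ← coe_adjoin_range_expRidge,
    ← Subalgebra.topologicalClosure_coe, topologicalClosure_adjoin_range_expRidge_eq_top]
  trivial

end

theorem sigmoid_universal_approximation_general
    (n : ℕ) (m M : Fin n → ℝ)
    (f : (Fin n → ℝ) → ℝ) (hf : Continuous f) (ε : ℝ) (hε : 0 < ε) :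
    ∃ (N : ℕ) (A B : Fin N → ℝ) (C : Fin N → Fin n → ℝ),
      ∀ x ∈ Set.univ.pi (fun i => Set.Icc (m i) (M i)),
        |(∑ i : Fin N, A i * sigmoid (∑ j : Fin n, C i j * x j + B i)) - f x| < ε := by
  set K := Set.univ.pi fun i => Set.Icc (m i) (M i)
  have : CompactSpace K := isCompact_iff_compactSpace.1 (isCompact_univ_pi fun _ => isCompact_Icc)
  let fK : C(K, ℝ) := ⟨fun x => f x, by fun_prop⟩
  have hfK : fK ∈ closure (span ℝ (range (sigmoidRidge K)) : Set C(K, ℝ)) := by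
    rw [← Submodule.topologicalClosure_coe, topologicalClosure_span_sigmoidRidge_eq_top]
    trivial
  obtain ⟨g, hg, hfg⟩ := Metric.mem_closure_iff.1 hfK ε hε
  obtain ⟨N, a, p, rfl⟩ := exists_fin_sum_eq_of_mem_span_range hg
  refine ⟨N, a, fun i => (p i).2, fun i => (p i).1, fun x hx => ?_⟩
  rw [dist_comm, ContinuousMap.dist_lt_iff hε] at hfg
  simpa [Real.dist_eq, dotProduct, fK] using hfg ⟨x, hx⟩

/-- Universal approximation by finite linear combinations of sigmoids of affine functionals,
uniformly on a box `K = ∏ᵢ [mᵢ, Mᵢ] ⊆ ℝⁿ`. -/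
theorem sigmoid_universal_approximation
    (n : ℕ) (hn : 1 ≤ n) (m M : Fin n → ℝ) (hmM : ∀ i, m i ≤ M i)
    (f : (Fin n → ℝ) → ℝ) (hf : Continuous f) (ε : ℝ) (hε : 0 < ε) :
    ∃ (N : ℕ) (A B : Fin N → ℝ) (C : Fin N → Fin n → ℝ),
      ∀ x ∈ Set.univ.pi (fun i => Set.Icc (m i) (M i)),
        |(∑ i : Fin N, A i * sigmoid (∑ j : Fin n, C i j * x j + B i)) - f x| < ε :=
  sigmoid_universal_approximation_general n m M f hf ε hε
end

section
/- Let K = ∏_{i=1}^n [mᵢ, Mᵢ] ⊆ ℝⁿ be a box and let μ and ν be finite Borel measures on ℝⁿ that vanish outside K (μ(ℝⁿ \ K) = ν(ℝⁿ \ K) = 0). If ∫ σ(c·x + b) dμ(x) = ∫ σ(c·x + b) dν(x) for every c ∈ ℝⁿ and every b ∈ ℝ, then μ = ν. (Equivalently: the sigmoid σ is a discriminatory function, so a finite signed Borel measure on K annihilating all functions x ↦ σ(c·x + b) must be zero.) -/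
/-!
As `k → ∞`, `σ(k (k (t - s) + 1))` tends to the indicator of `[s, ∞)` (the `+ 1` makes the
limit `1` at `t = s` as well), so by dominated convergence the sigmoid integrals determine the
mass of every half-space `{x | s ≤ L x}`, `L` a continuous linear functional. Hence the images of
`μ` and `ν` under every `L` agree, so their characteristic functions agree and `μ = ν`
(Cramér–Wold).
-/

open MeasureTheory

open Filter Topology Set

lemma tendsto_sigmoid_mul_indicator_Ici (s t : ℝ) :
    Tendsto (fun k : ℝ => Real.sigmoid (k * (k * (t - s) + 1))) atTop
      (𝓝 ((Ici s).indicator 1 t)) := by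
  by_cases hst : s ≤ t
  · rw [indicator_of_mem (mem_Ici.2 hst), Pi.one_apply]
    refine Real.tendsto_sigmoid_atTop.comp (tendsto_atTop_mono' _ ?_ tendsto_id)
    filter_upwards [eventually_ge_atTop 0] with k hk
    rw [id]
    nlinarith [mul_nonneg (mul_nonneg hk hk) (sub_nonneg.2 hst)]
  · rw [indicator_of_notMem (mt mem_Ici.1 hst)]
    have hneg : t - s < 0 := by linarith
    have : Tendsto (fun k : ℝ => k * (t - s) + 1) atTop atBot :=
      tendsto_atBot_add_const_right _ 1 (tendsto_id.atTop_mul_const_of_neg hneg)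
    exact Real.tendsto_sigmoid_atBot.comp (tendsto_id.atTop_mul_atBot₀ this)

lemma tendsto_integral_sigmoid_mul_measureReal_Ici (μ : Measure ℝ) [IsFiniteMeasure μ] (s : ℝ) :
    Tendsto (fun k : ℝ => ∫ t, Real.sigmoid (k * (k * (t - s) + 1)) ∂μ) atTop
      (𝓝 (μ.real (Ici s))) := by
  rw [← integral_indicator_one measurableSet_Ici]
  refine tendsto_integral_filter_of_dominated_convergence (fun _ => 1) ?_ ?_
    (integrable_const 1) (ae_of_all _ (tendsto_sigmoid_mul_indicator_Ici s))
  · exact .of_forall fun _ =>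
      (differentiable_sigmoid.continuous.comp (by fun_prop)).aestronglyMeasurable
  · refine .of_forall fun _ => ae_of_all _ fun t => ?_
    rw [Real.norm_of_nonneg (Real.sigmoid_nonneg _)]
    exact Real.sigmoid_le_one _

namespace MeasureTheory.Measure

theorem ext_of_integral_sigmoid_eq {μ ν : Measure ℝ} [IsFiniteMeasure μ] [IsFiniteMeasure ν]
    (h : ∀ a b : ℝ, ∫ t, Real.sigmoid (a * t + b) ∂μ = ∫ t, Real.sigmoid (a * t + b) ∂ν) :
    μ = ν := by
  refine ext_of_Ici μ ν fun s => ?_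
  have hlin : ∀ k t : ℝ, k * (k * (t - s) + 1) = (k * k) * t + k * (1 - k * s) :=
    fun k t => by ring
  have hμ := tendsto_integral_sigmoid_mul_measureReal_Ici μ s
  have hν := tendsto_integral_sigmoid_mul_measureReal_Ici ν s
  simp only [hlin, h] at hμ hν
  exact (measureReal_eq_measureReal_iff).1 (tendsto_nhds_unique hμ hν)

variable {E : Type*} [NormedAddCommGroup E] [NormedSpace ℝ E] [CompleteSpace E]
  [SecondCountableTopology E] [MeasurableSpace E] [BorelSpace E]
  {μ ν : Measure E} [IsFiniteMeasure μ] [IsFiniteMeasure ν]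

theorem ext_of_map_strongDual_eq (h : ∀ L : StrongDual ℝ E, μ.map L = ν.map L) : μ = ν :=
  ext_of_charFunDual <| funext fun L => by
    rw [charFunDual_eq_charFun_map_one, charFunDual_eq_charFun_map_one, h]

theorem ext_of_integral_sigmoid_strongDual_eq
    (h : ∀ (L : StrongDual ℝ E) (b : ℝ),
      ∫ x, Real.sigmoid (L x + b) ∂μ = ∫ x, Real.sigmoid (L x + b) ∂ν) : μ = ν := by
  refine ext_of_map_strongDual_eq fun L => ext_of_integral_sigmoid_eq fun a b => ?_
  rw [integral_map (by fun_prop) (by fun_prop), integral_map (by fun_prop) (by fun_prop)]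
  simpa using h (a • L) b

end MeasureTheory.Measure

lemma StrongDual.coe_eq_sum_mul_apply_single {ι : Type*} [Fintype ι] [DecidableEq ι]
    (L : StrongDual ℝ (ι → ℝ)) :
    ⇑L = fun x => ∑ j, L (Pi.single j 1) * x j := by
  ext x
  conv_lhs => rw [pi_eq_sum_univ' x]
  simp [map_sum, mul_comm]

theorem sigmoid_discriminatory_general
    (n : ℕ) (μ ν : Measure (Fin n → ℝ)) [IsFiniteMeasure μ] [IsFiniteMeasure ν]
    (h : ∀ (c : Fin n → ℝ) (b : ℝ),
      ∫ x, sigmoid (∑ j : Fin n, c j * x j + b) ∂μ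
        = ∫ x, sigmoid (∑ j : Fin n, c j * x j + b) ∂ν) :
    μ = ν := by
  refine Measure.ext_of_integral_sigmoid_strongDual_eq fun L b => ?_
  rw [StrongDual.coe_eq_sum_mul_apply_single L]
  exact h _ b -- `sigmoid` and `Real.sigmoid` agree definitionally

/-- The sigmoid is a discriminatory function: two finite Borel measures supported on a box
`K = ∏ᵢ [mᵢ, Mᵢ] ⊆ ℝⁿ` that integrate all functions `x ↦ σ(c·x + b)` identically must be
equal.  (Equivalently, a finite signed Borel measure on `K` annihilating all such
functions is zero.) -/
theorem sigmoid_discriminatory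
    (n : ℕ) (m M : Fin n → ℝ) (hmM : ∀ i, m i ≤ M i)
    (μ ν : Measure (Fin n → ℝ)) [IsFiniteMeasure μ] [IsFiniteMeasure ν]
    (hμ : μ (Set.univ.pi (fun i => Set.Icc (m i) (M i)))ᶜ = 0)
    (hν : ν (Set.univ.pi (fun i => Set.Icc (m i) (M i)))ᶜ = 0)
    (h : ∀ (c : Fin n → ℝ) (b : ℝ),
      ∫ x, sigmoid (∑ j : Fin n, c j * x j + b) ∂μ
        = ∫ x, sigmoid (∑ j : Fin n, c j * x j + b) ∂ν) :
    μ = ν :=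
  sigmoid_discriminatory_general n μ ν h
end

section
/- Let B, C_L, C_U be Hermitian matrices in M_d(ℂ) with C_L positive semidefinite and C_L ≤ B ≤ C_U in the Loewner order. Assume 0 < λ_min(C_L) < λ_max(C_L) and 0 < λ_min(C_U) < λ_max(C_U). Then for every natural number p ≥ 2: (i) B^p ≥ 𝒦(λ_min(C_L), λ_max(C_L), p)⁻¹ · C_L^p, and (ii) B^p ≤ 𝒦(λ_min(C_U), λ_max(C_U), p) · C_U^p, both in the Loewner order. -/
open scoped ComplexOrder

/-- The Kantorovich function `𝒦(m, M, r)` for `0 < m < M` and real `r ≠ 1`. -/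
noncomputable def kantorovich (m M r : ℝ) : ℝ :=
  (m * M ^ r - M * m ^ r) / ((r - 1) * (M - m)) *
    ((r - 1) * (M ^ r - m ^ r) / (r * (m * M ^ r - M * m ^ r))) ^ r

/-- The smallest eigenvalue of a Hermitian matrix, as the infimum of its real spectrum. -/
noncomputable def lamMin {d : ℕ} (A : Matrix (Fin d) (Fin d) ℂ) : ℝ := sInf (spectrum ℝ A)

/-- The largest eigenvalue of a Hermitian matrix, as the supremum of its real spectrum. -/
noncomputable def lamMax {d : ℕ} (A : Matrix (Fin d) (Fin d) ℂ) : ℝ := sSup (spectrum ℝ A)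

/-!
On `[m, M]` the convex function `t ↦ t ^ p` lies below its chord `μ t - ν`, so a Hermitian `A` with
spectrum in `[m, M]` satisfies `A ^ p ≤ μ A - ν`. The constant `𝒦(m, M, p)` is the least `K` with
`μ t - ν ≤ K t ^ p` for all `t > 0`; evaluated at a vector `x` (with `s = ⟨x, x⟩`) this gives the
reverse Hölder–McCarthy inequality `⟨A ^ p x, x⟩ s ^ (p - 1) ≤ 𝒦 ⟨A x, x⟩ ^ p`. If `A ≤ B`, then
`⟨A x, x⟩ ≤ ⟨B x, x⟩`, and Jensen's inequality for the spectral measure of `B` at `x` (Hölder–McCarthy)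
gives `⟨B x, x⟩ ^ p ≤ s ^ (p - 1) ⟨B ^ p x, x⟩`; together, `𝒦⁻¹ A ^ p ≤ B ^ p`.
The upper bound is the lower bound for `C_U⁻¹ ≤ B⁻¹`, whose spectrum lies in `[M⁻¹, m⁻¹]`, where `𝒦`
takes the same value, followed by inverting once more: inversion is operator antitone.
-/

open scoped MatrixOrder

section Scalar

variable {m M : ℝ} {p : ℕ}

lemma mul_pow_sub_mul_pow_pos (hm : 0 < m) (hmM : m < M) (hp : 2 ≤ p) :
    0 < m * M ^ p - M * m ^ p := by
  obtain ⟨q, rfl⟩ : ∃ q, p = q + 2 := ⟨p - 2, by omega⟩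
  have hpow : m ^ (q + 1) < M ^ (q + 1) := pow_lt_pow_left₀ hmM hm.le (by omega)
  have hM : 0 < M := hm.trans hmM
  calc (0 : ℝ) < m * M * (M ^ (q + 1) - m ^ (q + 1)) := by
        have := sub_pos.mpr hpow
        positivity
    _ = m * M ^ (q + 2) - M * m ^ (q + 2) := by ring

lemma pow_le_chord (hm : 0 ≤ m) (hmM : m < M) {x : ℝ} (hx : x ∈ Set.Icc m M) :
    x ^ p ≤ (M ^ p - m ^ p) / (M - m) * x - (m * M ^ p - M * m ^ p) / (M - m) := by
  have hMm : 0 < M - m := sub_pos.mpr hmM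
  have hx_comb : (M - x) / (M - m) * m + (x - m) / (M - m) * M = x := by field_simp; ring
  have hconv := (convexOn_pow p).2 (Set.mem_Ici.mpr hm) (Set.mem_Ici.mpr (hm.trans hmM.le))
    (div_nonneg (sub_nonneg.mpr hx.2) hMm.le) (div_nonneg (sub_nonneg.mpr hx.1) hMm.le)
    (by field_simp; ring)
  simp only [smul_eq_mul, hx_comb] at hconv
  calc x ^ p ≤ (M - x) / (M - m) * m ^ p + (x - m) / (M - m) * M ^ p := hconv
    _ = _ := by field_simp; ring

lemma pow_sum_mul_le_sum_pow_mul_sum_mul_pow {ι : Type*} (s : Finset ι) {w z : ι → ℝ}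
    (hw : ∀ i ∈ s, 0 ≤ w i) (hz : ∀ i ∈ s, 0 ≤ z i) (n : ℕ) :
    (∑ i ∈ s, w i * z i) ^ (n + 1) ≤ (∑ i ∈ s, w i) ^ n * ∑ i ∈ s, w i * z i ^ (n + 1) := by
  rcases (Finset.sum_nonneg hw).eq_or_lt with hW | hW
  · have hw0 : ∀ i ∈ s, w i = 0 := (Finset.sum_eq_zero_iff_of_nonneg hw).mp hW.symm
    have hwf (f : ι → ℝ) : ∑ i ∈ s, w i * f i = 0 :=
      Finset.sum_eq_zero fun i hi => by rw [hw0 i hi, zero_mul]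
    simp [hwf]
  have jensen := Real.pow_arith_mean_le_arith_mean_pow s (fun i => w i / ∑ j ∈ s, w j) z
    (fun i hi => div_nonneg (hw i hi) hW.le) (by rw [← Finset.sum_div, div_self hW.ne']) hz (n + 1)
  simp only [div_mul_eq_mul_div, ← Finset.sum_div, div_pow] at jensen
  rw [div_le_div_iff₀ (by positivity) hW, pow_succ (∑ i ∈ s, w i) n, ← mul_assoc] at jensen
  exact le_of_mul_le_mul_right (by linarith) hW

-- With `c = (p - 1) μ / (p ν)`, the curve `ν / (p - 1) · (c t) ^ p` touches the line `μ t - ν` at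
-- `t = 1 / c`, so Bernoulli's inequality at `c a / s` is the homogenised tangent-line bound.
lemma mul_sub_mul_mul_pow_le {μ ν a s : ℝ} (hμ : 0 ≤ μ) (hν : 0 < ν) (ha : 0 ≤ a) (hs : 0 < s)
    (hp : 2 ≤ p) :
    (μ * a - ν * s) * s ^ (p - 1) ≤ ν / (p - 1) * ((p - 1) * μ / (p * ν)) ^ p * a ^ p := by
  have hp1 : (1 : ℝ) < p := by exact_mod_cast hp
  have hp1' : (p : ℝ) - 1 ≠ 0 := by linarith
  set c := ((p : ℝ) - 1) * μ / (p * ν) with hc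
  have hca : 0 ≤ c * a / s := by
    have : (0 : ℝ) ≤ p - 1 := by linarith
    positivity
  have bernoulli : 1 + p * (c * a / s - 1) ≤ (c * a / s) ^ p := by
    simpa using one_add_mul_le_pow (a := c * a / s - 1) (by linarith) p
  have hs_pow : s ^ p = s * s ^ (p - 1) := by rw [← pow_succ', Nat.sub_add_cancel (by omega)]
  calc (μ * a - ν * s) * s ^ (p - 1) = ν / (p - 1) * s ^ p * (1 + p * (c * a / s - 1)) := by
        rw [hs_pow, hc]; field_simp; ring
    _ ≤ ν / (p - 1) * s ^ p * (c * a / s) ^ p := by gcongr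
    _ = ν / (p - 1) * c ^ p * a ^ p := by rw [div_pow, mul_pow]; field_simp

lemma kantorovich_natCast_eq (hmM : m ≠ M) :
    kantorovich m M p = (m * M ^ p - M * m ^ p) / (M - m) / (p - 1) *
      ((p - 1) * ((M ^ p - m ^ p) / (M - m)) / (p * ((m * M ^ p - M * m ^ p) / (M - m)))) ^ p := by
  have hMm : M - m ≠ 0 := sub_ne_zero.mpr hmM.symm
  simp only [kantorovich, Real.rpow_natCast]
  rw [div_div, mul_comm (M - m), mul_div_assoc _ (M ^ p - m ^ p), mul_div_assoc _ (_ / (M - m)),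
    mul_div_assoc' (p : ℝ), div_div_div_cancel_right₀ hMm]

lemma kantorovich_pos (hm : 0 < m) (hmM : m < M) (hp : 2 ≤ p) : 0 < kantorovich m M p := by
  have hν := mul_pow_sub_mul_pow_pos hm hmM hp
  have hμ : 0 < M ^ p - m ^ p := sub_pos.mpr (pow_lt_pow_left₀ hmM hm.le (by omega))
  have hp1 : (0 : ℝ) < p - 1 := by
    have : (2 : ℝ) ≤ p := by exact_mod_cast hp
    linarith
  have hMm : 0 < M - m := sub_pos.mpr hmM
  rw [kantorovich_natCast_eq hmM.ne]
  positivity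

lemma chord_mul_pow_le_kantorovich_mul_pow (hm : 0 < m) (hmM : m < M) (hp : 2 ≤ p) {a s : ℝ}
    (ha : 0 ≤ a) (hs : 0 < s) :
    ((M ^ p - m ^ p) / (M - m) * a - (m * M ^ p - M * m ^ p) / (M - m) * s) * s ^ (p - 1) ≤
      kantorovich m M p * a ^ p := by
  have hMm : 0 < M - m := sub_pos.mpr hmM
  have hμ : 0 ≤ (M ^ p - m ^ p) / (M - m) :=
    div_nonneg (sub_nonneg.mpr (pow_le_pow_left₀ hm.le hmM.le p)) hMm.le
  rw [kantorovich_natCast_eq hmM.ne]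
  exact mul_sub_mul_mul_pow_le hμ (div_pos (mul_pow_sub_mul_pow_pos hm hmM hp) hMm) ha hs hp

lemma kantorovich_inv_inv (hm : 0 < m) (hmM : m < M) (hp : 2 ≤ p) :
    kantorovich M⁻¹ m⁻¹ p = kantorovich m M p := by
  have hM : 0 < M := hm.trans hmM
  have hν := (mul_pow_sub_mul_pow_pos hm hmM hp).ne'
  have hMm : M - m ≠ 0 := by linarith
  simp only [kantorovich, Real.rpow_natCast, inv_pow]
  have hbase : ((p : ℝ) - 1) * ((m ^ p)⁻¹ - (M ^ p)⁻¹) / (p * (M⁻¹ * (m ^ p)⁻¹ - m⁻¹ * (M ^ p)⁻¹))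
      = ((p : ℝ) - 1) * (M ^ p - m ^ p) / (p * (m * M ^ p - M * m ^ p)) * (m * M) := by
    field_simp
  have hfactor : (M⁻¹ * (m ^ p)⁻¹ - m⁻¹ * (M ^ p)⁻¹) / (((p : ℝ) - 1) * (m⁻¹ - M⁻¹))
      = (m * M ^ p - M * m ^ p) / (((p : ℝ) - 1) * (M - m)) / (m * M) ^ p := by
    field_simp
    ring
  have hmM0 : (m * M) ^ p ≠ 0 := by positivity
  rw [hbase, hfactor, mul_pow _ (m * M), mul_comm (_ ^ p) ((m * M) ^ p), ← mul_assoc,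
    div_mul_cancel₀ _ hmM0]

end Scalar

section Spectrum

variable {A : Type*} [Ring A] [StarRing A] [TopologicalSpace A] [Algebra ℝ A] [PartialOrder A]
  [StarOrderedRing A] [ContinuousFunctionalCalculus ℝ A IsSelfAdjoint]

lemma pow_le_chord_of_spectrum_subset {a : A} (ha : IsSelfAdjoint a) {m M : ℝ} (hm : 0 ≤ m)
    (hmM : m < M) (hspec : spectrum ℝ a ⊆ Set.Icc m M) (p : ℕ) :
    a ^ p ≤ ((M ^ p - m ^ p) / (M - m)) • a -
      algebraMap ℝ A ((m * M ^ p - M * m ^ p) / (M - m)) := by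
  have := cfc_mono (a := a) (f := (· ^ p))
    (g := fun x => (M ^ p - m ^ p) / (M - m) * x - (m * M ^ p - M * m ^ p) / (M - m))
    fun x hx => pow_le_chord hm hmM (hspec hx)
  rwa [cfc_pow_id a p, cfc_sub _ _ a, cfc_const_mul_id _ a, cfc_const _ a] at this

end Spectrum

lemma spectrum_inv_subset_Icc {A : Type*} [Ring A] [Algebra ℝ A] (u : Aˣ) {m M : ℝ} (hm : 0 < m)
    (hspec : spectrum ℝ (u : A) ⊆ Set.Icc m M) :
    spectrum ℝ (↑u⁻¹ : A) ⊆ Set.Icc M⁻¹ m⁻¹ := by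
  intro x hx
  rw [← spectrum.map_inv, Set.mem_inv] at hx
  obtain ⟨hmx, hxM⟩ := hspec hx
  exact ⟨by simpa using inv_anti₀ (hm.trans_le hmx) hxM, by simpa using inv_anti₀ hm hmx⟩

namespace Matrix

variable {n 𝕜 : Type*} [Fintype n] [RCLike 𝕜]

lemma le_iff_forall_re_dotProduct_mulVec_le {A B : Matrix n n 𝕜} (hA : A.IsHermitian)
    (hB : B.IsHermitian) :
    A ≤ B ↔ ∀ x, RCLike.re (star x ⬝ᵥ A *ᵥ x) ≤ RCLike.re (star x ⬝ᵥ B *ᵥ x) := by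
  rw [le_iff, posSemidef_iff_dotProduct_mulVec, and_iff_right (hB.sub hA)]
  refine forall_congr' fun x => ?_
  rw [RCLike.nonneg_iff, (hB.sub hA).im_star_dotProduct_mulVec_self, and_iff_left rfl, sub_mulVec,
    dotProduct_sub, map_sub, sub_nonneg]

variable [DecidableEq n]

lemma PosDef.pow {A : Matrix n n 𝕜} (hA : A.PosDef) (k : ℕ) : (A ^ k).PosDef :=
  (hA.posSemidef.pow k).posDef_iff_isUnit.mpr (hA.isUnit.pow k)

lemma IsHermitian.dotProduct_cfc_mulVec {A : Matrix n n 𝕜} (hA : A.IsHermitian) (f : ℝ → ℝ)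
    (x : n → 𝕜) :
    star x ⬝ᵥ cfc f A *ᵥ x = ((∑ i, ‖(star (hA.eigenvectorUnitary : Matrix n n 𝕜) *ᵥ x) i‖ ^ 2 *
      f (hA.eigenvalues i) : ℝ) : 𝕜) := by
  set U : Matrix n n 𝕜 := (hA.eigenvectorUnitary : Matrix n n 𝕜)
  have hU : star x ᵥ* U = star (star U *ᵥ x) := by
    rw [star_mulVec, star_eq_conjTranspose, conjTranspose_conjTranspose]
  rw [hA.cfc_eq, IsHermitian.cfc, Unitary.conjStarAlgAut_apply, ← mulVec_mulVec, ← mulVec_mulVec,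
    dotProduct_mulVec, hU]
  simp only [dotProduct, mulVec_diagonal, Function.comp_apply, Pi.star_apply, RCLike.star_def]
  push_cast
  exact Finset.sum_congr rfl fun i _ => by rw [mul_left_comm, RCLike.conj_mul, mul_comm]

lemma PosSemidef.re_dotProduct_mulVec_pow_le {B : Matrix n n 𝕜} (hB : B.PosSemidef)
    (x : n → 𝕜) (k : ℕ) :
    RCLike.re (star x ⬝ᵥ B *ᵥ x) ^ (k + 1) ≤
      RCLike.re (star x ⬝ᵥ x) ^ k * RCLike.re (star x ⬝ᵥ (B ^ (k + 1)) *ᵥ x) := by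
  set w := fun i => ‖(star (hB.isHermitian.eigenvectorUnitary : Matrix n n 𝕜) *ᵥ x) i‖ ^ 2
  have hform (f : ℝ → ℝ) :
      RCLike.re (star x ⬝ᵥ cfc f B *ᵥ x) = ∑ i, w i * f (hB.isHermitian.eigenvalues i) := by
    rw [hB.isHermitian.dotProduct_cfc_mulVec, RCLike.ofReal_re]
  have h0 : RCLike.re (star x ⬝ᵥ x) = ∑ i, w i := by
    simpa [cfc_const_one ℝ B] using hform fun _ => 1
  have h1 : RCLike.re (star x ⬝ᵥ B *ᵥ x) = ∑ i, w i * hB.isHermitian.eigenvalues i := by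
    simpa [cfc_id' ℝ B] using hform fun t => t
  rw [h0, h1, ← cfc_pow_id (R := ℝ) B (k + 1), hform]
  exact pow_sum_mul_le_sum_pow_mul_sum_mul_pow _ (fun i _ => by positivity)
    (fun i _ => hB.eigenvalues_nonneg i) k

variable {A : Matrix n n 𝕜} {m M : ℝ} {p : ℕ}

lemma IsHermitian.re_dotProduct_pow_mulVec_mul_le (hA : A.IsHermitian) (hm : 0 < m) (hmM : m < M)
    (hspec : spectrum ℝ A ⊆ Set.Icc m M) (hp : 2 ≤ p) (x : n → 𝕜) :
    RCLike.re (star x ⬝ᵥ (A ^ p) *ᵥ x) * RCLike.re (star x ⬝ᵥ x) ^ (p - 1) ≤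
      kantorovich m M p * RCLike.re (star x ⬝ᵥ A *ᵥ x) ^ p := by
  rcases eq_or_ne x 0 with rfl | hx
  · simp [zero_pow (by omega : p ≠ 0)]
  set μ := (M ^ p - m ^ p) / (M - m)
  set ν := (m * M ^ p - M * m ^ p) / (M - m)
  have hs : 0 < RCLike.re (star x ⬝ᵥ x) :=
    (RCLike.pos_iff.mp (dotProduct_star_self_pos_iff.mpr hx)).1
  have hA0 : A.PosSemidef := nonneg_iff_posSemidef.mp <|
    (StarOrderedRing.nonneg_iff_spectrum_nonneg (R := ℝ) A).mpr fun t ht => hm.le.trans (hspec ht).1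
  have hchord : A ^ p ≤ μ • A - ν • 1 := by
    simpa [Algebra.algebraMap_eq_smul_one] using
      pow_le_chord_of_spectrum_subset hA hm.le hmM hspec p
  have hchord_x := (le_iff_forall_re_dotProduct_mulVec_le (hA.pow p)
    ((hA.smul (IsSelfAdjoint.all _)).sub (isHermitian_one.smul (IsSelfAdjoint.all _)))).mp hchord x
  simp only [sub_mulVec, smul_mulVec, one_mulVec, dotProduct_sub, dotProduct_smul, map_sub,
    RCLike.smul_re] at hchord_x
  calc _ ≤ (μ * RCLike.re (star x ⬝ᵥ A *ᵥ x) - ν * RCLike.re (star x ⬝ᵥ x)) *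
        RCLike.re (star x ⬝ᵥ x) ^ (p - 1) := by gcongr
    _ ≤ _ := chord_mul_pow_le_kantorovich_mul_pow hm hmM hp (hA0.re_dotProduct_nonneg x) hs

theorem inv_kantorovich_smul_pow_le_pow {B : Matrix n n 𝕜} (hA : A.IsHermitian) (hAB : A ≤ B)
    (hm : 0 < m) (hmM : m < M) (hspec : spectrum ℝ A ⊆ Set.Icc m M) (hp : 2 ≤ p) :
    (kantorovich m M p)⁻¹ • A ^ p ≤ B ^ p := by
  have hK := kantorovich_pos hm hmM hp
  have hA0 : A.PosSemidef := nonneg_iff_posSemidef.mp <|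
    (StarOrderedRing.nonneg_iff_spectrum_nonneg (R := ℝ) A).mpr fun t ht => hm.le.trans (hspec ht).1
  have hB0 : B.PosSemidef := nonneg_iff_posSemidef.mp (hA0.nonneg.trans hAB)
  rw [le_iff_forall_re_dotProduct_mulVec_le ((hA.pow p).smul (IsSelfAdjoint.all _))
    (hB0.isHermitian.pow p)]
  intro x
  rcases eq_or_ne x 0 with rfl | hx
  · simp
  have hs : 0 < RCLike.re (star x ⬝ᵥ x) :=
    (RCLike.pos_iff.mp (dotProduct_star_self_pos_iff.mpr hx)).1
  have h_mono := (le_iff_forall_re_dotProduct_mulVec_le hA hB0.isHermitian).mp hAB x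
  have h_mcCarthy := hB0.re_dotProduct_mulVec_pow_le x (p - 1)
  rw [Nat.sub_add_cancel (by omega)] at h_mcCarthy
  rw [smul_mulVec, dotProduct_smul, RCLike.smul_re, inv_mul_le_iff₀ hK]
  refine le_of_mul_le_mul_right ?_ (pow_pos hs (p - 1))
  calc _ ≤ kantorovich m M p * RCLike.re (star x ⬝ᵥ A *ᵥ x) ^ p :=
        hA.re_dotProduct_pow_mulVec_mul_le hm hmM hspec hp x
    _ ≤ kantorovich m M p * RCLike.re (star x ⬝ᵥ B *ᵥ x) ^ p := by
        gcongr
        exact hA0.re_dotProduct_nonneg x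
    _ ≤ kantorovich m M p * (RCLike.re (star x ⬝ᵥ x) ^ (p - 1) *
          RCLike.re (star x ⬝ᵥ (B ^ p) *ᵥ x)) := by gcongr
    _ = _ := by ring

open scoped Matrix.Norms.L2Operator in
lemma PosDef.inv_le_inv_iff {A B : Matrix n n ℂ} (hA : A.PosDef) (hB : B.PosDef) :
    A⁻¹ ≤ B⁻¹ ↔ B ≤ A := by
  simpa using CStarAlgebra.inv_le_inv_iff (a := hA.isUnit.unit) (b := hB.isUnit.unit)
    hA.posSemidef.nonneg hB.posSemidef.nonneg

theorem pow_le_kantorovich_smul_pow {B C : Matrix n n ℂ} (hB : B.PosDef) (hBC : B ≤ C)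
    (hm : 0 < m) (hmM : m < M) (hspec : spectrum ℝ C ⊆ Set.Icc m M) (hp : 2 ≤ p) :
    B ^ p ≤ kantorovich m M p • C ^ p := by
  have hC : C.PosDef := by simpa using hB.add_posSemidef hBC
  have hK := kantorovich_pos hm hmM hp
  have hspec_inv : spectrum ℝ C⁻¹ ⊆ Set.Icc M⁻¹ m⁻¹ := by
    simpa using spectrum_inv_subset_Icc hC.isUnit.unit hm (by simpa using hspec)
  have h_inv := inv_kantorovich_smul_pow_le_pow hC.inv.isHermitian
    ((hC.inv_le_inv_iff hB).mpr hBC) (inv_pos.mpr (hm.trans hmM)) (inv_strictAnti₀ hm hmM)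
    hspec_inv hp
  rw [kantorovich_inv_inv hm hmM hp, inv_pow', inv_pow'] at h_inv
  have h_smul_inv : (kantorovich m M p • C ^ p)⁻¹ = (kantorovich m M p)⁻¹ • (C ^ p)⁻¹ := by
    refine inv_eq_left_inv ?_
    rw [smul_mul_smul_comm, inv_mul_cancel₀ hK.ne',
      nonsing_inv_mul _ ((isUnit_iff_isUnit_det _).mp ((hC.pow p).isUnit)), one_smul]
  rw [← h_smul_inv] at h_inv
  exact (((hC.pow p).smul hK).inv_le_inv_iff (hB.pow p)).mp h_inv

end Matrix

lemma spectrum_subset_Icc_lamMin_lamMax {d : ℕ} (A : Matrix (Fin d) (Fin d) ℂ) :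
    spectrum ℝ A ⊆ Set.Icc (lamMin A) (lamMax A) := fun _ hx =>
  ⟨csInf_le Matrix.finite_real_spectrum.bddBelow hx,
    le_csSup Matrix.finite_real_spectrum.bddAbove hx⟩

theorem kantorovich_power_bounds_general
    (d : ℕ) (B CL CU : Matrix (Fin d) (Fin d) ℂ)
    (hCL : CL.IsHermitian)
    (hLB : (B - CL).PosSemidef) (hBU : (CU - B).PosSemidef)
    (hL0 : 0 < lamMin CL) (hL1 : lamMin CL < lamMax CL)
    (hU0 : 0 < lamMin CU) (hU1 : lamMin CU < lamMax CU)
    (p : ℕ) (hp : 2 ≤ p) :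
    (B ^ p - (kantorovich (lamMin CL) (lamMax CL) (p : ℝ))⁻¹ • CL ^ p).PosSemidef ∧
    ((kantorovich (lamMin CU) (lamMax CU) (p : ℝ)) • CU ^ p - B ^ p).PosSemidef := by
  have hCL_spec := spectrum_subset_Icc_lamMin_lamMax CL
  have hCL_pos : CL.PosDef := Matrix.isStrictlyPositive_iff_posDef.mp <|
    (StarOrderedRing.isStrictlyPositive_iff_spectrum_pos (R := ℝ) CL).mpr fun t ht =>
      hL0.trans_le (hCL_spec ht).1
  have hB : B.PosDef := by simpa using hCL_pos.add_posSemidef hLB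
  exact ⟨Matrix.inv_kantorovich_smul_pow_le_pow hCL hLB hL0 hL1 hCL_spec hp,
    Matrix.pow_le_kantorovich_smul_pow hB hBU hU0 hU1 (spectrum_subset_Icc_lamMin_lamMax CU) hp⟩

/-- If `C_L ≤ B ≤ C_U` in the Loewner order, with `C_L` positive semidefinite and the
extreme eigenvalues of `C_L` and `C_U` strictly positive and distinct, then for every `p ≥ 2`
one has `𝒦(λ_min C_L, λ_max C_L, p)⁻¹ • C_L^p ≤ B^p ≤ 𝒦(λ_min C_U, λ_max C_U, p) • C_U^p`. -/
theorem kantorovich_power_bounds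
    (d : ℕ) (B CL CU : Matrix (Fin d) (Fin d) ℂ)
    (hB : B.IsHermitian) (hCL : CL.IsHermitian) (hCU : CU.IsHermitian)
    (hCLpsd : CL.PosSemidef)
    (hLB : (B - CL).PosSemidef) (hBU : (CU - B).PosSemidef)
    (hL0 : 0 < lamMin CL) (hL1 : lamMin CL < lamMax CL)
    (hU0 : 0 < lamMin CU) (hU1 : lamMin CU < lamMax CU)
    (p : ℕ) (hp : 2 ≤ p) :
    (B ^ p - (kantorovich (lamMin CL) (lamMax CL) (p : ℝ))⁻¹ • CL ^ p).PosSemidef ∧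
    ((kantorovich (lamMin CU) (lamMax CU) (p : ℝ)) • CU ^ p - B ^ p).PosSemidef :=
  kantorovich_power_bounds_general d B CL CU hCL hLB hBU hL0 hL1 hU0 hU1 p hp
end
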